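/- For all integers p, r and all i ≥ 0, the automorphism s_i of ℤ[c,t] satisfies: s_i(c^r_p) = c^r_p if r ≠ ±i; s_i(c^r_p) = c^{i+1}_p + t_i · c^{i+1}_{p−1} if r = i > 0; and s_i(c^r_p) = c^{−i+1}_p − t_{i+1} · c^{−i+1}_{p−1} if r = −i ≤ 0 (in particular s_0(c^0_p) = c^1_p − t_1 c^1_{p−1}). -/

import Mathlib

open scoped Classical

noncomputable section

/-- The polynomial ring ℤ[c,t]: variables `Sum.inl p` (p ≥ 1) are the `c` variables,
variables `Sum.inr i` (i ≥ 1) are the `t` variables. -/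
abbrev P : Type := MvPolynomial (ℕ ⊕ ℕ) ℤ

/-- t_r, with the convention t_r = t_{-r} for r < 0. -/
def tvar (r : ℤ) : P := MvPolynomial.X (Sum.inr r.natAbs)

/-- c_p, with c_0 = 1 and c_p = 0 for p < 0. -/
def cvar (p : ℤ) : P :=
  if p = 0 then 1 else if p < 0 then 0 else MvPolynomial.X (Sum.inl p.toNat)

def negT (i : ℕ) : P := - MvPolynomial.X (Sum.inr i)

/-- e_j(-t_1,…,-t_m). -/
def esymNT (m j : ℕ) : P :=
  ∑ S ∈ Finset.powersetCard j (Finset.Icc 1 m), ∏ i ∈ S, negT i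

/-- h_j(-t_1,…,-t_m). -/
def hsymNT (m j : ℕ) : P :=
  ∑ f ∈ (Finset.Icc 1 m).sym j, (Multiset.map negT (f : Multiset ℕ)).prod

/-- h^r_j(-t): complete homogeneous for r ≥ 0, elementary in |r| variables for r < 0,
and 0 for j < 0. -/
def hNT (r j : ℤ) : P :=
  if j < 0 then 0
  else if 0 ≤ r then hsymNT r.toNat j.toNat
  else esymNT (-r).toNat j.toNat

/-- c^r_p = Σ_{j=0}^p c_{p-j} h^r_j(-t). -/
def cc (r p : ℤ) : P :=
  ∑ j ∈ Finset.range (p.toNat + 1), cvar (p - j) * hNT r j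

/-- c^β_α = Π_i c^{β_i}_{α_i} (sequences are indexed from 1; entry 0 is inert since c^r_0 = 1). -/
def cmon (β α : ℕ → ℤ) : P := ∏ᶠ i, cc (β i) (α i)

/-- The sequence obtained from α by the raising-operator monomial Π_{(i,j)} R_{ij}^{n(i,j)}. -/
def raiseSeq (n : (ℕ × ℕ) →₀ ℕ) (α : ℕ → ℤ) : ℕ → ℤ := fun m =>
  α m + ∑ p ∈ n.support, (n p : ℤ) * ((if p.1 = m then 1 else 0) - (if p.2 = m then 1 else 0))

/-- Coefficient of R^m in the factor attached to one pair: (1-R) if `a` only,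
(1+R)⁻¹ if `b` only, (1-R)(1+R)⁻¹ if both, 1 if neither (only evaluated at m ≥ 1). -/
def pairCoeff (a b : Prop) (m : ℕ) : ℤ :=
  if a then (if b then 2 * (-1 : ℤ)^m else if m ≤ 1 then (-1 : ℤ)^m else 0)
  else (if b then (-1 : ℤ)^m else 0)

def roCoeff (A B : Set (ℕ × ℕ)) (n : (ℕ × ℕ) →₀ ℕ) : ℤ :=
  ∏ p ∈ n.support, pairCoeff (p ∈ A) (p ∈ B) (n p)

/-- Apply the raising operator expression Π_{p∈A}(1-R_p) · Π_{p∈B}(1+R_p)⁻¹ to c^β_α. -/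
def applyRO (A B : Set (ℕ × ℕ)) (β α : ℕ → ℤ) : P :=
  ∑ᶠ n : (ℕ × ℕ) →₀ ℕ, (roCoeff A B n) • cmon β (raiseSeq n α)

/-- The set Δ° of all pairs (i,j) with 1 ≤ i < j. -/
def Upper : Set (ℕ × ℕ) := {p | 1 ≤ p.1 ∧ p.1 < p.2}

/-- A valid set of pairs: a finite order ideal of Δ°. -/
def ValidPairs (D : Set (ℕ × ℕ)) : Prop :=
  D ⊆ Upper ∧ D.Finite ∧
    ∀ p ∈ D, ∀ q ∈ Upper, q.1 ≤ p.1 → q.2 ≤ p.2 → q ∈ D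

/-- a_j(D) = #{i < j : (i,j) ∉ D}. -/
def aD (D : Set (ℕ × ℕ)) (j : ℕ) : ℕ :=
  ((Finset.Ico 1 j).filter (fun i => (i, j) ∉ D)).card

/-- γ_j(D,μ) = k + 1 - μ_j + a_j(D). -/
def gammaSeq (k : ℕ) (D : Set (ℕ × ℕ)) (μ : ℕ → ℤ) (j : ℕ) : ℤ :=
  (k : ℤ) + 1 - μ j + aD D j

/-- T(D,μ) = R^D c^{γ(D,μ)}_μ, where R^D = Π_{i<j}(1-R_{ij}) Π_{(i,j)∈D}(1+R_{ij})⁻¹. -/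
def Tpol (k : ℕ) (D : Set (ℕ × ℕ)) (μ : ℕ → ℤ) : P :=
  applyRO Upper D (gammaSeq k D μ) μ

def FinSupp (α : ℕ → ℤ) : Prop := ∃ N, ∀ m, N ≤ m → α m = 0

/-- Partitions, as integer sequences indexed from 1 (entry 0 is 0). -/
def IsPartition (lam : ℕ → ℤ) : Prop :=
  lam 0 = 0 ∧ (∀ i, 1 ≤ i → 0 ≤ lam i) ∧ (∀ i, 1 ≤ i → lam (i+1) ≤ lam i) ∧ FinSupp lam

/-- k-strict partitions: parts greater than k are distinct. -/
def IsKStrict (k : ℕ) (lam : ℕ → ℤ) : Prop :=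
  IsPartition lam ∧ ∀ i, 1 ≤ i → (k : ℤ) < lam i → lam (i+1) < lam i

/-- C(λ) = {(i,j) : 1 ≤ i < j, λ_i + λ_j > 2k + j - i}. -/
def Cset (k : ℕ) (lam : ℕ → ℤ) : Set (ℕ × ℕ) :=
  {p | 1 ≤ p.1 ∧ p.1 < p.2 ∧ 2*(k:ℤ) + (p.2:ℤ) - (p.1:ℤ) < lam p.1 + lam p.2}

/-- β_j(λ) = k + 1 - λ_j + #{i < j : (i,j) ∉ C(λ)}. -/
def betaSeq (k : ℕ) (lam : ℕ → ℤ) (j : ℕ) : ℤ :=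
  (k : ℤ) + 1 - lam j + ((Finset.Ico 1 j).filter (fun i => (i, j) ∉ Cset k lam)).card

/-- The double theta polynomial Θ_λ(c|t) = R^λ c^{β(λ)}_λ. -/
def Theta (k : ℕ) (lam : ℕ → ℤ) : P :=
  applyRO Upper (Cset k lam) (betaSeq k lam) lam

def zeroSeq : ℕ → ℤ := fun _ => 0

/-- The single theta polynomial Θ_λ(c) = R^λ c_λ. -/
def ThetaSingle (k : ℕ) (lam : ℕ → ℤ) : P :=
  applyRO Upper (Cset k lam) zeroSeq lam

/-- The ideal generated by I^{(k)} in ℤ[c,t]. -/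
def Ik (k : ℕ) : Ideal P :=
  Ideal.span {x | ∃ p : ℕ, k < p ∧
    x = cvar (p:ℤ) * cvar (p:ℤ)
      + 2 * ∑ i ∈ Finset.Icc 1 p, (-1 : P)^i * (cvar ((p : ℤ) + i) * cvar ((p : ℤ) - i))}

/-- ℤ[t] = polynomials in t₁, t₂, …; variable n stands for t_{n+1}. -/
abbrev Zt : Type := MvPolynomial ℕ ℤ

/-- The embedding ℤ[t] → ℤ[c,t]. -/
def tEmbed : Zt →+* P :=
  (MvPolynomial.aeval (fun n : ℕ => (MvPolynomial.X (Sum.inr (n+1)) : P))).toRingHom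

/-- α ↦ α + r·ε_j. -/
def addAt (α : ℕ → ℤ) (j : ℕ) (r : ℤ) : ℕ → ℤ := fun m => α m + if m = j then r else 0

def epsSeq (j : ℕ) : ℕ → ℤ := fun m => if m = j then 1 else 0

/-- The sequence (λ_1,…,λ_{j-1}, r, s, μ_{j+2},…) with prescribed entries r, s at j, j+1. -/
def twoSet (ν : ℕ → ℤ) (j : ℕ) (r s : ℤ) : ℕ → ℤ :=
  fun m => if m = j then r else if m = j+1 then s else ν m

/-- Pairs (i,j) with 1 ≤ i < j ≤ ℓ. -/
def BddPairs (ℓ : ℕ) : Set (ℕ × ℕ) := {p | 1 ≤ p.1 ∧ p.1 < p.2 ∧ p.2 ≤ ℓ}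

/-- Boxes [r,c] and [r',c'] are k-related: |c-k-1| + r = |c'-k-1| + r'. -/
def kRel (k : ℕ) (r c r' c' : ℤ) : Prop :=
  |c - (k:ℤ) - 1| + r = |c' - (k:ℤ) - 1| + r'

/-- Case (i) of λ → μ: μ is obtained from λ by adding a single box (in some row h). -/
def ArrowBox (lam μ : ℕ → ℤ) : Prop :=
  ∃ h : ℕ, 1 ≤ h ∧ ∀ m, μ m = lam m + if m = h then 1 else 0

/-- Case (ii) of λ → μ: remove r boxes from a column c ≤ k of λ (giving ν) and add r+1
boxes to a single row h of ν, so that the removed boxes and the bottom box of μ in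
column c are each k-related to one of the added boxes. -/
def ArrowMove (k : ℕ) (lam μ : ℕ → ℤ) : Prop :=
  ∃ c h r : ℕ, 1 ≤ c ∧ c ≤ k ∧ 1 ≤ h ∧ 1 ≤ r ∧
    ∃ ν : ℕ → ℤ, IsPartition ν ∧
      ∃ S : Finset ℕ, S.card = r ∧
        (∀ x ∈ S, 1 ≤ x ∧ lam x = (c:ℤ) ∧ ν x = (c:ℤ) - 1) ∧
        (∀ x, x ∉ S → ν x = lam x) ∧
        (∀ m, μ m = ν m + if m = h then (r:ℤ) + 1 else 0) ∧
        (∀ x ∈ S, ∃ y : ℤ, ν h + 1 ≤ y ∧ y ≤ ν h + r + 1 ∧ kRel k x c h y) ∧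
        (∀ b : ℕ, 1 ≤ b → (c:ℤ) ≤ μ b → μ (b+1) < (c:ℤ) →
          ∃ y : ℤ, ν h + 1 ≤ y ∧ y ≤ ν h + r + 1 ∧ kRel k b c h y)

/-- λ → μ for k-strict partitions. -/
def ChevArrow (k : ℕ) (lam μ : ℕ → ℤ) : Prop :=
  IsKStrict k μ ∧ (ArrowBox lam μ ∨ ArrowMove k lam μ)

/-- The Chevalley coefficient e_{λμ}: 2 iff μ ⊃ λ with added box neither in column k+1
nor k-related to a bottom box in one of the first k columns of λ; 1 otherwise. -/
def eCoeff (k : ℕ) (lam μ : ℕ → ℤ) : ℤ :=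
  if ∃ h : ℕ, 1 ≤ h ∧ (∀ m, μ m = lam m + if m = h then 1 else 0) ∧
      lam h + 1 ≠ (k:ℤ) + 1 ∧
      ¬ ∃ c x : ℕ, 1 ≤ c ∧ c ≤ k ∧ 1 ≤ x ∧ (c:ℤ) ≤ lam x ∧ lam (x+1) < (c:ℤ) ∧
          kRel k x c h (lam h + 1)
  then 2 else 1

/-- Correspondence between k-strict partitions contained in the (n-k)×(n+k) rectangle and
k-Grassmannian elements of W_n (one-line notation w : ℕ → ℤ on indices 1..n). -/
def GrassCorrespond (k n : ℕ) (w : ℕ → ℤ) (lam : ℕ → ℤ) : Prop :=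
  (∀ m, 1 ≤ m → m ≤ n → 1 ≤ (w m).natAbs ∧ (w m).natAbs ≤ n) ∧
  (∀ m m', 1 ≤ m → m ≤ n → 1 ≤ m' → m' ≤ n → (w m).natAbs = (w m').natAbs → m = m') ∧
  (∀ m, 1 ≤ m → m ≤ k → 0 < w m) ∧
  (∀ m, 1 ≤ m → m + 1 ≤ k → w m < w (m+1)) ∧
  (∀ m, k + 1 ≤ m → m + 1 ≤ n → w m < w (m+1)) ∧
  (∀ i, 1 ≤ i → k + i ≤ n →
    (w (k+i) < 0 → lam i = (k:ℤ) + ((w (k+i)).natAbs : ℤ)) ∧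
    (0 < w (k+i) → lam i = (((Finset.Icc 1 k).filter (fun p => w (k+i) < w p)).card : ℤ))) ∧
  (∀ i, n - k < i → lam i = 0)

/-- The simple reflection s_i acting on the values ±1, …, ±n of signed permutations. -/
def sRefl (i : ℕ) (x : ℤ) : ℤ :=
  if i = 0 then (if x = 1 then -1 else if x = -1 then 1 else x)
  else if x = (i:ℤ) then (i:ℤ)+1
  else if x = (i:ℤ)+1 then (i:ℤ)
  else if x = -(i:ℤ) then -((i:ℤ)+1)
  else if x = -((i:ℤ)+1) then -(i:ℤ)
  else x

/-- Images of the variables under the automorphism s_i of ℤ[c,t]. -/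
def sImage (i : ℕ) : (ℕ ⊕ ℕ) → P
  | Sum.inl p =>
      if i = 0 then
        (if p = 0 then MvPolynomial.X (Sum.inl 0) else
          cvar (p:ℤ) + 2 * ∑ j ∈ Finset.Icc 1 p, (negT 1)^j * cvar ((p:ℤ) - (j:ℤ)))
      else MvPolynomial.X (Sum.inl p)
  | Sum.inr m =>
      if i = 0 then (if m = 1 then negT 1 else MvPolynomial.X (Sum.inr m))
      else if m = i then MvPolynomial.X (Sum.inr (i+1))
      else if m = i+1 then MvPolynomial.X (Sum.inr i)
      else MvPolynomial.X (Sum.inr m)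

/-- The ring endomorphism s_i of ℤ[c,t]. -/
def sAut (i : ℕ) : P →+* P := (MvPolynomial.aeval (sImage i)).toRingHom

/-- Denominator of the divided difference ∂_i: 2t₁ for i = 0, t_{i+1} - t_i for i ≥ 1. -/
def dden (i : ℕ) : P :=
  if i = 0 then 2 * MvPolynomial.X (Sum.inr 1)
  else MvPolynomial.X (Sum.inr (i+1)) - MvPolynomial.X (Sum.inr i)

/-- The divided difference operator ∂_i: the (unique, since P is a domain) quotient
(f - s_i f)/(denominator) whenever the division is exact. -/
def ddiff (i : ℕ) (f : P) : P :=
  if h : ∃ g : P, f - sAut i f = dden i * g then h.choose else 0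

/-! With c(x) = Σ c_p x^p and h^r(x) = Σ_j h^r_j(-t) x^j, the generating series of the c^r_p is
c(x) h^r(x), where h^m(x) = Π_{l ≤ m} (1 + t_l x)⁻¹ and h^{-m}(x) = Π_{l ≤ m} (1 - t_l x).
For i ≥ 1, s_i fixes c(x) and swaps t_i and t_{i+1}, so a product over l ≤ m is unchanged
unless m = i, where the factor of t_i is traded for that of t_{i+1}. The reflection s_0 multiplies
c(x) by (1 - t_1 x)/(1 + t_1 x) and flips the sign of t_1 in every nonempty product, which
cancels that multiplier for r ≠ 0. Comparing coefficients of x^p gives the claims. -/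

section SymmetricFunctionRecursions

open Finset

variable {α R : Type*} [DecidableEq α] [CommSemiring R]

theorem sum_sym_insert_succ {s : Finset α} {a : α} (ha : a ∉ s) (n : ℕ) (F : α → R) :
    ∑ f ∈ (insert a s).sym (n + 1), ((f : Multiset α).map F).prod
      = ∑ f ∈ s.sym (n + 1), ((f : Multiset α).map F).prod
        + F a * ∑ f ∈ (insert a s).sym n, ((f : Multiset α).map F).prod := by
  rw [← sum_filter_add_sum_filter_not _ (fun f => a ∈ f), add_comm]
  congr 1
  · refine sum_congr (ext fun f => ?_) fun _ _ => rfl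
    simp only [mem_filter, mem_sym_iff, mem_insert]
    exact ⟨fun ⟨h, haf⟩ b hb => (h b hb).resolve_left (by rintro rfl; exact haf hb),
      fun h => ⟨fun b hb => Or.inr (h b hb), fun haf => ha (h a haf)⟩⟩
  · rw [mul_sum]
    refine sum_bij' (fun f hf => f.erase a (mem_filter.mp hf).2) (fun g _ => a ::ₛ g)
      (fun f hf => ?_) (fun g hg => ?_) (fun f _ => Sym.cons_erase _)
      (fun g _ => Sym.erase_cons_head g a _) (fun f hf => ?_)
    · rw [mem_filter, mem_sym_iff] at hf
      rw [mem_sym_iff]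
      intro b hb
      rw [← Sym.mem_coe, Sym.coe_erase] at hb
      exact hf.1 b (Multiset.mem_of_mem_erase hb)
    · rw [mem_sym_iff] at hg
      refine mem_filter.mpr ⟨mem_sym_iff.mpr fun b hb => ?_, Sym.mem_cons_self a g⟩
      rcases Sym.mem_cons.mp hb with rfl | hb
      · exact mem_insert_self b s
      · exact hg b hb
    · conv_lhs => rw [← Sym.cons_erase (mem_filter.mp hf).2]
      rw [Sym.coe_cons, Multiset.map_cons, Multiset.prod_cons]

theorem sum_powersetCard_insert_succ {s : Finset α} {a : α} (ha : a ∉ s) (n : ℕ) (F : α → R) :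
    ∑ S ∈ powersetCard (n + 1) (insert a s), ∏ i ∈ S, F i
      = ∑ S ∈ powersetCard (n + 1) s, ∏ i ∈ S, F i
        + F a * ∑ S ∈ powersetCard n s, ∏ i ∈ S, F i := by
  have ha' : ∀ S ∈ powersetCard n s, a ∉ S := fun S hS h => ha ((mem_powersetCard.mp hS).1 h)
  rw [powersetCard_succ_insert ha, sum_union, mul_sum,
    sum_image fun S hS T hT h => by
      rw [← erase_insert (ha' S hS), ← erase_insert (ha' T hT), h]]
  · exact congrArg _ (sum_congr rfl fun S hS => prod_insert (ha' S hS))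
  · refine disjoint_left.mpr fun S hS hS' => ?_
    obtain ⟨T, -, rfl⟩ := mem_image.mp hS'
    exact ha ((mem_powersetCard.mp hS).1 (mem_insert_self a T))

end SymmetricFunctionRecursions

theorem hsymNT_zero_right (m : ℕ) : hsymNT m 0 = 1 := by
  simp [hsymNT, Finset.sym_zero, Sym.eq_nil_of_card_zero ∅]

theorem esymNT_zero_right (m : ℕ) : esymNT m 0 = 1 := by
  simp [esymNT]

theorem hsymNT_zero_succ (j : ℕ) : hsymNT 0 (j + 1) = 0 := by
  rw [hsymNT, Finset.Icc_eq_empty (by omega), Finset.sym_empty, Finset.sum_empty]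

theorem esymNT_zero_succ (j : ℕ) : esymNT 0 (j + 1) = 0 := by
  rw [esymNT, Finset.powersetCard_eq_empty.mpr (by simp), Finset.sum_empty]

theorem hNT_zero_right (r : ℤ) : hNT r 0 = 1 := by
  simp [hNT, hsymNT_zero_right, esymNT_zero_right]

theorem hNT_natCast (m n : ℕ) : hNT m n = hsymNT m n := by
  simp [hNT]

theorem hNT_neg_natCast (m n : ℕ) : hNT (-m) n = esymNT m n := by
  rcases m.eq_zero_or_pos with rfl | hm
  · rw [Nat.cast_zero, neg_zero, ← Nat.cast_zero, hNT_natCast]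
    cases n with
    | zero => rw [hsymNT_zero_right, esymNT_zero_right]
    | succ n => rw [hsymNT_zero_succ, esymNT_zero_succ]
  · simp [hNT, hm.ne']

theorem hsymNT_succ_succ (m j : ℕ) :
    hsymNT (m + 1) (j + 1) = hsymNT m (j + 1) + negT (m + 1) * hsymNT (m + 1) j := by
  unfold hsymNT
  rw [← Finset.insert_Icc_right_eq_Icc_add_one (by omega), sum_sym_insert_succ (by simp)]

theorem esymNT_succ_succ (m j : ℕ) :
    esymNT (m + 1) (j + 1) = esymNT m (j + 1) + negT (m + 1) * esymNT m j := by
  unfold esymNT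
  rw [← Finset.insert_Icc_right_eq_Icc_add_one (by omega), sum_powersetCard_insert_succ (by simp)]

section LinearFactors

open PowerSeries

variable {R S : Type*} [CommRing R] [CommRing S]

def linFactor (a : R) : R⟦X⟧ := 1 + C a * X

def linProd (f : ℕ → R) (m : ℕ) : R⟦X⟧ := ∏ l ∈ Finset.Icc 1 m, linFactor (f l)

theorem linFactor_zero : linFactor (0 : R) = 1 := by
  simp [linFactor]

theorem coeff_zero_mul_linFactor (g : R⟦X⟧) (a : R) : coeff 0 (g * linFactor a) = coeff 0 g := by
  simp [linFactor, mul_add, ← mul_assoc]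

theorem coeff_succ_mul_linFactor (g : R⟦X⟧) (a : R) (n : ℕ) :
    coeff (n + 1) (g * linFactor a) = coeff (n + 1) g + a * coeff n g := by
  rw [linFactor, mul_add, mul_one, ← mul_assoc, mul_comm g, mul_assoc, map_add, coeff_C_mul,
    coeff_succ_mul_X]

theorem isUnit_linFactor (a : R) : IsUnit (linFactor a) := by
  simp [isUnit_iff_constantCoeff, linFactor]

theorem map_linFactor (φ : R →+* S) (a : R) : map φ (linFactor a) = linFactor (φ a) := by
  simp [linFactor]

theorem map_linProd (φ : R →+* S) (f : ℕ → R) (m : ℕ) :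
    map φ (linProd f m) = linProd (φ ∘ f) m := by
  simp [linProd, map_linFactor]

theorem linProd_zero (f : ℕ → R) : linProd f 0 = 1 := by
  simp [linProd]

theorem linProd_succ (f : ℕ → R) (m : ℕ) :
    linProd f (m + 1) = linProd f m * linFactor (f (m + 1)) :=
  Finset.prod_Icc_succ_top (by omega) _

theorem isUnit_linProd (f : ℕ → R) (m : ℕ) : IsUnit (linProd f m) :=
  IsUnit.prod_iff.mpr fun _ _ => isUnit_linFactor _

theorem linProd_comp_swap_of_ne (f : ℕ → R) {i m : ℕ} (hi : 0 < i) (hm : m ≠ i) :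
    linProd (f ∘ Equiv.swap i (i + 1)) m = linProd f m := by
  rcases lt_or_gt_of_ne hm with hm | hm
  · refine Finset.prod_congr rfl fun l hl => ?_
    rw [Finset.mem_Icc] at hl
    rw [Function.comp_apply, Equiv.swap_apply_of_ne_of_ne (by omega) (by omega)]
  · refine Equiv.Perm.prod_comp _ _ (fun l => linFactor (f l)) fun l hl => ?_
    rw [Set.mem_ofPred_eq, Equiv.swap_apply_ne_self_iff] at hl
    simp only [Finset.coe_Icc, Set.mem_Icc]
    omega

theorem linProd_comp_swap_self (f : ℕ → R) (k : ℕ) :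
    linProd (f ∘ Equiv.swap (k + 1) (k + 2)) (k + 1) = linProd f k * linFactor (f (k + 2)) := by
  rw [linProd_succ, linProd_comp_swap_of_ne f (Nat.succ_pos k) (by omega),
    Function.comp_apply, Equiv.swap_apply_left]

theorem linFactor_mul_linProd_of_eq_of_ne_one {f g : ℕ → R} (hfg : ∀ l, l ≠ 1 → g l = f l)
    {m : ℕ} (hm : 1 ≤ m) :
    linFactor (f 1) * linProd g m = linFactor (g 1) * linProd f m := by
  have h1 : 1 ∈ Finset.Icc 1 m := Finset.mem_Icc.mpr ⟨le_rfl, hm⟩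
  rw [linProd, linProd, ← Finset.mul_prod_erase _ _ h1, ← Finset.mul_prod_erase _ _ h1,
    Finset.prod_congr rfl fun l hl => by rw [hfg l (Finset.ne_of_mem_erase hl)]]
  ring

end LinearFactors

def tv (l : ℕ) : P := MvPolynomial.X (Sum.inr l)

theorem negT_eq_neg_tv (l : ℕ) : negT l = -tv l := rfl

theorem tvar_natCast (l : ℕ) : tvar l = tv l := by
  rw [tvar, Int.natAbs_natCast, tv]

theorem sAut_X (i : ℕ) (x : ℕ ⊕ ℕ) : sAut i (MvPolynomial.X x) = sImage i x :=
  MvPolynomial.aeval_X _ _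

theorem sAut_tv_of_pos {i : ℕ} (hi : 0 < i) (l : ℕ) :
    sAut i (tv l) = tv (Equiv.swap i (i + 1) l) := by
  rw [tv, sAut_X, sImage, if_neg hi.ne', Equiv.swap_apply_def]
  split_ifs <;> rfl

theorem sAut_comp_tv_of_pos {i : ℕ} (hi : 0 < i) : sAut i ∘ tv = tv ∘ Equiv.swap i (i + 1) :=
  funext (sAut_tv_of_pos hi)

theorem sAut_comp_negT_of_pos {i : ℕ} (hi : 0 < i) :
    sAut i ∘ negT = negT ∘ Equiv.swap i (i + 1) :=
  funext fun l => by simp [negT_eq_neg_tv, sAut_tv_of_pos hi]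

theorem sAut_zero_tv (l : ℕ) : sAut 0 (tv l) = if l = 1 then negT 1 else tv l := by
  rw [tv, sAut_X, sImage, if_pos rfl]

theorem sAut_cvar_of_pos {i : ℕ} (hi : 0 < i) (p : ℤ) : sAut i (cvar p) = cvar p := by
  unfold cvar
  split_ifs
  · exact map_one _
  · exact map_zero _
  · rw [sAut_X, sImage, if_neg hi.ne']

theorem sAut_zero_cvar_natCast (n : ℕ) :
    sAut 0 (cvar n) = cvar n + 2 * ∑ j ∈ Finset.Icc 1 n, negT 1 ^ j * cvar (n - j) := by
  rcases n.eq_zero_or_pos with rfl | hn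
  · simp [cvar]
  · have hcvar : cvar n = MvPolynomial.X (Sum.inl n) := by simp [cvar, hn.ne']
    rw [hcvar, sAut_X, sImage, if_pos rfl, if_neg hn.ne', hcvar]

section GeneratingSeries

open PowerSeries

def hSeries (r : ℤ) : P⟦X⟧ := mk fun n => hNT r n

def cSeries : P⟦X⟧ := mk fun n => cvar n

def ccSeries (r : ℤ) : P⟦X⟧ := cSeries * hSeries r

theorem coeff_ccSeries (r : ℤ) (n : ℕ) : coeff n (ccSeries r) = cc r n := by
  rw [ccSeries, mul_comm, coeff_mul, Finset.Nat.sum_antidiagonal_eq_sum_range_succ_mk, cc,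
    Int.toNat_natCast]
  refine Finset.sum_congr rfl fun j hj => ?_
  rw [Finset.mem_range] at hj
  simp only [hSeries, cSeries, coeff_mk, Nat.cast_sub (Nat.lt_succ_iff.mp hj)]
  ring

theorem cc_of_neg (r : ℤ) {p : ℤ} (hp : p < 0) : cc r p = 0 := by
  simp [cc, Int.toNat_of_nonpos hp.le, cvar, hp, hp.ne]

theorem hSeries_succ_mul_linFactor (m : ℕ) :
    hSeries (m + 1 : ℕ) * linFactor (tv (m + 1)) = hSeries m := by
  refine PowerSeries.ext fun n => ?_
  cases n with
  | zero => simp [coeff_zero_mul_linFactor, hSeries, hNT_zero_right]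
  | succ n =>
    simp only [coeff_succ_mul_linFactor, hSeries, coeff_mk, hNT_natCast, hsymNT_succ_succ,
      negT_eq_neg_tv]
    ring

theorem hSeries_zero : hSeries 0 = 1 := by
  refine PowerSeries.ext fun n => ?_
  have h := hNT_natCast 0 n
  rw [Nat.cast_zero] at h
  rw [hSeries, coeff_mk, coeff_one, h]
  cases n with
  | zero => rw [hsymNT_zero_right, if_pos rfl]
  | succ n => rw [hsymNT_zero_succ, if_neg n.succ_ne_zero]

theorem hSeries_natCast_mul_linProd (m : ℕ) : hSeries m * linProd tv m = 1 := by
  induction m with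
  | zero => rw [Nat.cast_zero, hSeries_zero, linProd_zero, one_mul]
  | succ m ih =>
    rw [linProd_succ, mul_comm (linProd tv m), ← mul_assoc, hSeries_succ_mul_linFactor, ih]

theorem hSeries_neg_succ (m : ℕ) :
    hSeries (-(m + 1 : ℕ)) = hSeries (-m) * linFactor (negT (m + 1)) := by
  refine PowerSeries.ext fun n => ?_
  cases n with
  | zero => simp [coeff_zero_mul_linFactor, hSeries, hNT_zero_right]
  | succ n =>
    simp only [coeff_succ_mul_linFactor, hSeries, coeff_mk, hNT_neg_natCast, esymNT_succ_succ]

theorem hSeries_neg_natCast (m : ℕ) : hSeries (-m) = linProd negT m := by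
  induction m with
  | zero => rw [Nat.cast_zero, neg_zero, hSeries_zero, linProd_zero]
  | succ m ih => rw [hSeries_neg_succ, ih, linProd_succ]

theorem map_cSeries_of_pos {i : ℕ} (hi : 0 < i) : map (sAut i) cSeries = cSeries := by
  refine PowerSeries.ext fun n => ?_
  simp [cSeries, sAut_cvar_of_pos hi]

theorem map_sAut_zero_cSeries_mul :
    map (sAut 0) cSeries * linFactor (tv 1) = cSeries * linFactor (negT 1) := by
  -- s₀ multiplies the series of the c_p by 1 + 2 Σ_{j ≥ 1} (-t₁ x)^j = (1 - t₁ x) / (1 + t₁ x).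
  set g : P⟦X⟧ := mk fun j => if j = 0 then 1 else 2 * negT 1 ^ j
  have hmap : map (sAut 0) cSeries = cSeries * g := by
    refine PowerSeries.ext fun n => ?_
    rw [mul_comm, coeff_mul, Finset.Nat.sum_antidiagonal_eq_sum_range_succ_mk,
      Finset.range_eq_Ico, Finset.sum_eq_sum_Ico_succ_bot n.succ_pos, zero_add, Nat.succ_eq_add_one,
      Finset.Ico_add_one_right_eq_Icc]
    simp only [cSeries, g, coeff_map, coeff_mk, sAut_zero_cvar_natCast, Finset.mul_sum]
    refine congrArg₂ _ (by simp) (Finset.sum_congr rfl fun j hj => ?_)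
    rw [Finset.mem_Icc] at hj
    rw [if_neg (by omega), Nat.cast_sub hj.2]
    ring
  have hg : g * linFactor (tv 1) = linFactor (negT 1) := by
    refine PowerSeries.ext fun n => ?_
    rcases n with _ | _ | n
    · simp [g, linFactor]
    · rw [coeff_succ_mul_linFactor]
      simp [g, linFactor, negT_eq_neg_tv]
      ring
    · rw [coeff_succ_mul_linFactor]
      simp [g, linFactor, negT_eq_neg_tv]
      ring
  rw [hmap, mul_assoc, hg]

end GeneratingSeries

section ReflectionAction

open PowerSeries

theorem map_hSeries_of_pos_of_ne {i : ℕ} (hi : 0 < i) {r : ℤ} (h1 : r ≠ i) (h2 : r ≠ -i) :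
    map (sAut i) (hSeries r) = hSeries r := by
  obtain ⟨m, rfl | rfl⟩ := Int.eq_nat_or_neg r
  · have hm : m ≠ i := by exact_mod_cast h1
    have h := congrArg (map (sAut i)) (hSeries_natCast_mul_linProd m)
    rw [map_mul, map_one, map_linProd, sAut_comp_tv_of_pos hi,
      linProd_comp_swap_of_ne _ hi hm] at h
    exact (isUnit_linProd tv m).mul_left_inj.mp (h.trans (hSeries_natCast_mul_linProd m).symm)
  · rw [hSeries_neg_natCast, map_linProd, sAut_comp_negT_of_pos hi,
      linProd_comp_swap_of_ne _ hi (by omega)]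

theorem map_hSeries_self {i : ℕ} (hi : 0 < i) :
    map (sAut i) (hSeries i) = hSeries (i + 1) * linFactor (tv i) := by
  obtain ⟨k, rfl⟩ : ∃ k, i = k + 1 := ⟨i - 1, by omega⟩
  have h := congrArg (map (sAut (k + 1))) (hSeries_natCast_mul_linProd (k + 1))
  rw [map_mul, map_one, map_linProd, sAut_comp_tv_of_pos hi, linProd_comp_swap_self] at h
  refine ((isUnit_linProd tv k).mul (isUnit_linFactor _)).mul_left_inj.mp (h.trans ?_)
  rw [← hSeries_natCast_mul_linProd (k + 2), linProd_succ, linProd_succ,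
    show ((k + 1 : ℕ) : ℤ) + 1 = (k + 2 : ℕ) by push_cast; ring]
  ring

theorem map_hSeries_neg_self {i : ℕ} (hi : 0 < i) :
    map (sAut i) (hSeries (-i)) = hSeries (-i + 1) * linFactor (negT (i + 1)) := by
  obtain ⟨k, rfl⟩ : ∃ k, i = k + 1 := ⟨i - 1, by omega⟩
  rw [hSeries_neg_natCast, map_linProd, sAut_comp_negT_of_pos hi, linProd_comp_swap_self,
    show -((k + 1 : ℕ) : ℤ) + 1 = -k by push_cast; ring, hSeries_neg_natCast]

theorem map_hSeries_zero_mul {r : ℤ} (hr : r ≠ 0) :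
    map (sAut 0) (hSeries r) * linFactor (negT 1) = hSeries r * linFactor (tv 1) := by
  obtain ⟨m, rfl | rfl⟩ := Int.eq_nat_or_neg r
  · have hm : 1 ≤ m := by omega
    have hinv := congrArg (map (sAut 0)) (hSeries_natCast_mul_linProd m)
    rw [map_mul, map_one, map_linProd] at hinv
    have hswap := linFactor_mul_linProd_of_eq_of_ne_one (f := tv) (g := sAut 0 ∘ tv)
      (fun l hl => by rw [Function.comp_apply, sAut_zero_tv, if_neg hl]) hm
    have hg1 : (sAut 0 ∘ tv) 1 = negT 1 := by rw [Function.comp_apply, sAut_zero_tv, if_pos rfl]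
    rw [hg1] at hswap
    refine (isUnit_linProd tv m).mul_left_inj.mp ?_
    calc map (sAut 0) (hSeries m) * linFactor (negT 1) * linProd tv m
        = map (sAut 0) (hSeries m) * linProd (sAut 0 ∘ tv) m * linFactor (tv 1) := by
          rw [mul_assoc, ← hswap]; ring
      _ = hSeries m * linFactor (tv 1) * linProd tv m := by
          rw [hinv, mul_right_comm, hSeries_natCast_mul_linProd, one_mul]
  · have hm : 1 ≤ m := by omega
    have hswap := linFactor_mul_linProd_of_eq_of_ne_one (f := negT) (g := sAut 0 ∘ negT)
      (fun l hl => by simp [negT_eq_neg_tv, sAut_zero_tv, hl]) hm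
    have hg1 : (sAut 0 ∘ negT) 1 = tv 1 := by simp [negT_eq_neg_tv, sAut_zero_tv]
    rw [hg1] at hswap
    rw [hSeries_neg_natCast, map_linProd, mul_comm, hswap, mul_comm]

theorem map_ccSeries_of_ne (i : ℕ) {r : ℤ} (h1 : r ≠ i) (h2 : r ≠ -i) :
    map (sAut i) (ccSeries r) = ccSeries r := by
  rcases i.eq_zero_or_pos with rfl | hi
  · refine ((isUnit_linFactor (tv 1)).mul (isUnit_linFactor (negT 1))).mul_left_inj.mp ?_
    calc map (sAut 0) (ccSeries r) * (linFactor (tv 1) * linFactor (negT 1))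
        = (map (sAut 0) cSeries * linFactor (tv 1))
            * (map (sAut 0) (hSeries r) * linFactor (negT 1)) := by
          rw [ccSeries, map_mul]; ring
      _ = ccSeries r * (linFactor (tv 1) * linFactor (negT 1)) := by
          rw [map_sAut_zero_cSeries_mul, map_hSeries_zero_mul (by simpa using h1), ccSeries]
          ring
  · rw [ccSeries, map_mul, map_cSeries_of_pos hi, map_hSeries_of_pos_of_ne hi h1 h2]

theorem map_ccSeries_self {i : ℕ} (hi : 0 < i) :
    map (sAut i) (ccSeries i) = ccSeries (i + 1) * linFactor (tv i) := by
  rw [ccSeries, map_mul, map_cSeries_of_pos hi, map_hSeries_self hi, ccSeries, mul_assoc]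

theorem map_ccSeries_neg_self (i : ℕ) :
    map (sAut i) (ccSeries (-i)) = ccSeries (-i + 1) * linFactor (negT (i + 1)) := by
  rcases i.eq_zero_or_pos with rfl | hi
  · have h1 : hSeries 1 * linFactor (tv 1) = 1 := by
      simpa [linProd_succ, linProd_zero] using hSeries_natCast_mul_linProd 1
    refine (isUnit_linFactor (tv 1)).mul_left_inj.mp ?_
    rw [Nat.cast_zero, neg_zero, zero_add, ccSeries, ccSeries, hSeries_zero, mul_one,
      map_sAut_zero_cSeries_mul]
    linear_combination (-(cSeries * linFactor (negT 1))) * h1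
  · rw [ccSeries, map_mul, map_cSeries_of_pos hi, map_hSeries_neg_self hi, ccSeries, mul_assoc]

theorem map_cc_of_map_ccSeries_eq_mul_linFactor (φ : P →+* P) {r r' : ℤ} {a : P}
    (h : map φ (ccSeries r) = ccSeries r' * linFactor a) (p : ℤ) :
    φ (cc r p) = cc r' p + a * cc r' (p - 1) := by
  rcases lt_or_ge p 0 with hp | hp
  · rw [cc_of_neg r hp, cc_of_neg r' hp, cc_of_neg r' (by omega), map_zero, mul_zero, add_zero]
  obtain ⟨n, rfl⟩ := Int.eq_ofNat_of_zero_le hp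
  have hn := congrArg (coeff n) h
  rw [coeff_map, coeff_ccSeries] at hn
  rw [hn]
  cases n with
  | zero =>
    rw [coeff_zero_mul_linFactor, coeff_ccSeries, cc_of_neg r' (by omega : ((0 : ℕ) : ℤ) - 1 < 0),
      mul_zero, add_zero]
  | succ n =>
    rw [coeff_succ_mul_linFactor, coeff_ccSeries, coeff_ccSeries, Nat.cast_succ, add_sub_cancel_right]

theorem map_cc_of_map_ccSeries_eq (φ : P →+* P) {r r' : ℤ}
    (h : map φ (ccSeries r) = ccSeries r') (p : ℤ) : φ (cc r p) = cc r' p := by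
  simpa using
    map_cc_of_map_ccSeries_eq_mul_linFactor φ (a := 0) (by rw [linFactor_zero, mul_one, h]) p

end ReflectionAction

theorem stmt17 (i : ℕ) (r p : ℤ) :
    ((r ≠ (i:ℤ) ∧ r ≠ -(i:ℤ)) → sAut i (cc r p) = cc r p) ∧
    ((0 < i ∧ r = (i:ℤ)) →
      sAut i (cc r p) = cc ((i:ℤ) + 1) p + tvar (i:ℤ) * cc ((i:ℤ) + 1) (p - 1)) ∧
    (r = -(i:ℤ) →
      sAut i (cc r p) = cc (-(i:ℤ) + 1) p - tvar ((i:ℤ) + 1) * cc (-(i:ℤ) + 1) (p - 1)) := by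
  refine ⟨fun ⟨h1, h2⟩ => map_cc_of_map_ccSeries_eq _ (map_ccSeries_of_ne i h1 h2) p,
    fun ⟨hi, hr⟩ => ?_, fun hr => ?_⟩
  · subst hr
    rw [tvar_natCast]
    exact map_cc_of_map_ccSeries_eq_mul_linFactor _ (map_ccSeries_self hi) p
  · subst hr
    rw [show (i : ℤ) + 1 = (i + 1 : ℕ) by push_cast; ring, tvar_natCast, sub_eq_add_neg, ← neg_mul,
      ← negT_eq_neg_tv]
    exact map_cc_of_map_ccSeries_eq_mul_linFactor _ (map_ccSeries_neg_self i) p
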